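/- arXiv:2605.20951 — 3 statements merged into one kernel-verified Lean document; each statement's English description precedes it below -/
import Mathlib

section
/- Let (A, ≤_A) and (B, ≤_B) be nonempty finite linear orders, and let ⊑ be the product (componentwise) partial order on A × B. If ≤₁ and ≤₂ are linear orders on A × B such that ⊑ equals the intersection of ≤₁ and ≤₂, then {≤₁, ≤₂} = {≤_lex, ≤_alex}, where ≤_lex and ≤_alex denote the lexicographic and antilexicographic orders on A × B respectively. -/
def lexRel {A B : Type*} [LinearOrder A] [LinearOrder B] (p q : A × B) : Prop :=
  p.1 < q.1 ∨ (p.1 = q.1 ∧ p.2 ≤ q.2)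

def alexRel {A B : Type*} [LinearOrder A] [LinearOrder B] (p q : A × B) : Prop :=
  p.2 < q.2 ∨ (p.2 = q.2 ∧ p.1 ≤ q.1)

section Aux

variable {A B : Type*} [LinearOrder A] [LinearOrder B]

/-- On an incomparable pair, the two realizer orders point in opposite directions. -/
lemma flip_lemma (r s : A × B → A × B → Prop)
    (hr : IsLinearOrder (A × B) r) (hs : IsLinearOrder (A × B) s)
    (hreal : ∀ p q : A × B, (p.1 ≤ q.1 ∧ p.2 ≤ q.2) ↔ (r p q ∧ s p q))
    {p q : A × B} (h1 : p.1 < q.1) (h2 : q.2 < p.2) : r p q ↔ s q p := by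
  constructor
  · intro h
    rcases hs.total p q with h' | h'
    · exact absurd ((hreal p q).mpr ⟨h, h'⟩).2 (not_le.mpr h2)
    · exact h'
  · intro h
    rcases hr.total p q with h' | h'
    · exact h'
    · exact absurd ((hreal q p).mpr ⟨h', h⟩).1 (not_le.mpr h1)

/-- The orientation of a realizer order is the same on all incomparable pairs. -/
lemma transfer (r s : A × B → A × B → Prop)
    (hr : IsLinearOrder (A × B) r) (hs : IsLinearOrder (A × B) s)
    (hreal : ∀ p q : A × B, (p.1 ≤ q.1 ∧ p.2 ≤ q.2) ↔ (r p q ∧ s p q))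
    {a a' c c' : A} {b b' d d' : B}
    (hac : a < c) (hdb : d < b) (hac' : a' < c') (hdb' : d' < b')
    (h : r (a, b) (c, d)) : r (a', b') (c', d') := by
  have hprod : ∀ p q : A × B, p.1 ≤ q.1 → p.2 ≤ q.2 → r p q :=
    fun p q h1 h2 => ((hreal p q).mp ⟨h1, h2⟩).1
  have hsprod : ∀ p q : A × B, p.1 ≤ q.1 → p.2 ≤ q.2 → s p q :=
    fun p q h1 h2 => ((hreal p q).mp ⟨h1, h2⟩).2
  set A0 := a ⊓ a' with hA0
  set C0 := c ⊔ c' with hC0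
  set B0 := b ⊔ b' with hB0
  set D0 := d ⊓ d' with hD0
  have hdB0 : d < B0 := lt_of_lt_of_le hdb le_sup_left
  have hD0B0 : D0 < B0 := lt_of_le_of_lt inf_le_left hdB0
  have hA0C0 : A0 < C0 := lt_of_le_of_lt inf_le_left (lt_of_lt_of_le hac le_sup_left)
  have ha'C0 : a' < C0 := lt_of_lt_of_le hac' le_sup_right
  -- step 1 : r (a, B0) (c, d)
  have s1 : s (c, d) (a, b) := (flip_lemma r s hr hs hreal hac hdb).mp h
  have s1' : s (c, d) (a, B0) :=
    hs.trans _ _ _ s1 (hsprod (a, b) (a, B0) le_rfl le_sup_left)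
  have step1 : r (a, B0) (c, d) :=
    (flip_lemma r s hr hs hreal hac hdB0).mpr s1'
  -- step 2 : r (a, B0) (c, D0)
  have s2 : s (c, D0) (a, B0) :=
    hs.trans _ _ _ (hsprod (c, D0) (c, d) le_rfl inf_le_left) s1'
  have step2 : r (a, B0) (c, D0) :=
    (flip_lemma r s hr hs hreal hac hD0B0).mpr s2
  -- step 3 : r (A0, B0) (c, D0)
  have step3 : r (A0, B0) (c, D0) :=
    hr.trans _ _ _ (hprod (A0, B0) (a, B0) inf_le_left le_rfl) step2
  -- step 4 : r (A0, B0) (C0, D0)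
  have step4 : r (A0, B0) (C0, D0) :=
    hr.trans _ _ _ step3 (hprod (c, D0) (C0, D0) le_sup_left le_rfl)
  -- step 5 : r (a', B0) (C0, D0)
  have s5 : s (C0, D0) (A0, B0) := (flip_lemma r s hr hs hreal hA0C0 hD0B0).mp step4
  have s5' : s (C0, D0) (a', B0) :=
    hs.trans _ _ _ s5 (hsprod (A0, B0) (a', B0) inf_le_right le_rfl)
  have step5 : r (a', B0) (C0, D0) :=
    (flip_lemma r s hr hs hreal ha'C0 hD0B0).mpr s5'
  -- step 6 : r (a', B0) (c', D0)
  have s6 : s (c', D0) (a', B0) :=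
    hs.trans _ _ _ (hsprod (c', D0) (C0, D0) le_sup_right le_rfl) s5'
  have step6 : r (a', B0) (c', D0) :=
    (flip_lemma r s hr hs hreal hac' hD0B0).mpr s6
  -- step 7 : r (a', b') (c', D0)
  have step7 : r (a', b') (c', D0) :=
    hr.trans _ _ _ (hprod (a', b') (a', B0) le_rfl le_sup_right) step6
  -- step 8 : r (a', b') (c', d')
  exact hr.trans _ _ _ step7 (hprod (c', D0) (c', d') le_rfl inf_le_right)

lemma eq_lex (r : A × B → A × B → Prop) (hr : IsLinearOrder (A × B) r)
    (hprod : ∀ p q : A × B, p.1 ≤ q.1 → p.2 ≤ q.2 → r p q)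
    (hinc : ∀ p q : A × B, p.1 < q.1 → q.2 < p.2 → r p q) : r = lexRel := by
  funext p q
  apply propext
  constructor
  · intro h
    by_contra hl
    unfold lexRel at hl
    push_neg at hl
    obtain ⟨hl1, hl2⟩ := hl
    have key : r q p ∧ p ≠ q := by
      rcases lt_or_eq_of_le hl1 with hq | hq
      · rcases le_or_gt q.2 p.2 with hb | hb
        · exact ⟨hprod q p hq.le hb, fun he => by subst he; exact lt_irrefl _ hq⟩
        · exact ⟨hinc q p hq hb, fun he => by subst he; exact lt_irrefl _ hq⟩
      · have hb : q.2 < p.2 := hl2 hq.symm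
        exact ⟨hprod q p hq.le hb.le, fun he => by subst he; exact lt_irrefl _ hb⟩
    exact key.2 (hr.antisymm _ _ h key.1)
  · rintro (h | ⟨h1, h2⟩)
    · rcases le_or_gt p.2 q.2 with hb | hb
      · exact hprod p q h.le hb
      · exact hinc p q h hb
    · exact hprod p q h1.le h2

lemma eq_alex (r : A × B → A × B → Prop) (hr : IsLinearOrder (A × B) r)
    (hprod : ∀ p q : A × B, p.1 ≤ q.1 → p.2 ≤ q.2 → r p q)
    (hinc : ∀ p q : A × B, p.2 < q.2 → q.1 < p.1 → r p q) : r = alexRel := by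
  funext p q
  apply propext
  constructor
  · intro h
    by_contra hl
    unfold alexRel at hl
    push_neg at hl
    obtain ⟨hl1, hl2⟩ := hl
    have key : r q p ∧ p ≠ q := by
      rcases lt_or_eq_of_le hl1 with hq | hq
      · rcases le_or_gt q.1 p.1 with hb | hb
        · exact ⟨hprod q p hb hq.le, fun he => by subst he; exact lt_irrefl _ hq⟩
        · exact ⟨hinc q p hq hb, fun he => by subst he; exact lt_irrefl _ hq⟩
      · have hb : q.1 < p.1 := hl2 hq.symm
        exact ⟨hprod q p hb.le hq.le, fun he => by subst he; exact lt_irrefl _ hb⟩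
    exact key.2 (hr.antisymm _ _ h key.1)
  · rintro (h | ⟨h1, h2⟩)
    · rcases le_or_gt p.1 q.1 with hb | hb
      · exact hprod p q hb h.le
      · exact hinc p q h hb
    · exact hprod p q h2 h1.le

end Aux

theorem realizer_of_prod_is_lex_alex {A B : Type*} [LinearOrder A] [LinearOrder B]
    [Fintype A] [Fintype B] [Nonempty A] [Nonempty B]
    (r₁ r₂ : A × B → A × B → Prop)
    (h₁ : IsLinearOrder (A × B) r₁) (h₂ : IsLinearOrder (A × B) r₂)
    (hreal : ∀ p q : A × B, (p.1 ≤ q.1 ∧ p.2 ≤ q.2) ↔ (r₁ p q ∧ r₂ p q)) :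
    (r₁ = lexRel ∧ r₂ = alexRel) ∨ (r₁ = alexRel ∧ r₂ = lexRel) := by
  have hreal' : ∀ p q : A × B, (p.1 ≤ q.1 ∧ p.2 ≤ q.2) ↔ (r₂ p q ∧ r₁ p q) :=
    fun p q => (hreal p q).trans and_comm
  have hp1 : ∀ p q : A × B, p.1 ≤ q.1 → p.2 ≤ q.2 → r₁ p q :=
    fun p q h h' => ((hreal p q).mp ⟨h, h'⟩).1
  have hp2 : ∀ p q : A × B, p.1 ≤ q.1 → p.2 ≤ q.2 → r₂ p q :=
    fun p q h h' => ((hreal p q).mp ⟨h, h'⟩).2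
  by_cases hex : ∃ p q : A × B, p.1 < q.1 ∧ q.2 < p.2
  · obtain ⟨p₀, q₀, ha0, hb0⟩ := hex
    rcases h₁.total p₀ q₀ with h | h
    · left
      have hall : ∀ p q : A × B, p.1 < q.1 → q.2 < p.2 → r₁ p q := by
        intro p q ha hb
        exact transfer r₁ r₂ h₁ h₂ hreal ha0 hb0 ha hb h
      refine ⟨eq_lex r₁ h₁ hp1 hall, eq_alex r₂ h₂ hp2 ?_⟩
      intro p q hb ha
      exact (flip_lemma r₁ r₂ h₁ h₂ hreal ha hb).mp (hall q p ha hb)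
    · right
      have h' : r₂ p₀ q₀ := (flip_lemma r₂ r₁ h₂ h₁ hreal' ha0 hb0).mpr h
      have hall : ∀ p q : A × B, p.1 < q.1 → q.2 < p.2 → r₂ p q := by
        intro p q ha hb
        exact transfer r₂ r₁ h₂ h₁ hreal' ha0 hb0 ha hb h'
      refine ⟨eq_alex r₁ h₁ hp1 ?_, eq_lex r₂ h₂ hp2 hall⟩
      intro p q hb ha
      exact (flip_lemma r₂ r₁ h₂ h₁ hreal' ha hb).mp (hall q p ha hb)
  · push_neg at hex
    left
    refine ⟨eq_lex r₁ h₁ hp1 ?_, eq_alex r₂ h₂ hp2 ?_⟩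
    · intro p q ha hb
      exact absurd (hex p q ha) (not_le.mpr hb)
    · intro p q hb ha
      exact absurd (hex q p ha) (not_le.mpr hb)
end

section
/- Let (A, ≤_A), (B, ≤_B), (C, ≤_C), (D, ≤_D) be nonempty finite linear orders, and let f : A × B → C × D be an embedding of the product partial order on A × B into the product partial order on C × D (i.e., f is injective and p ⊑ q iff f(p) ⊑ f(q)). Then either f is simultaneously an embedding of (A × B, ≤_lex) into (C × D, ≤_lex) and of (A × B, ≤_alex) into (C × D, ≤_alex), or f is simultaneously an embedding of (A × B, ≤_lex) into (C × D, ≤_alex) and of (A × B, ≤_alex) into (C × D, ≤_lex). -/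
section Aux

variable {A B : Type*} [LinearOrder A] [LinearOrder B]

lemma lex_refl (p : A × B) : lexRel p p := Or.inr ⟨rfl, le_refl _⟩

lemma alex_refl (p : A × B) : alexRel p p := Or.inr ⟨rfl, le_refl _⟩

lemma lex_total (p q : A × B) : lexRel p q ∨ lexRel q p := by
  rcases lt_trichotomy p.1 q.1 with h | h | h
  · exact Or.inl (Or.inl h)
  · rcases le_total p.2 q.2 with h2 | h2
    · exact Or.inl (Or.inr ⟨h, h2⟩)
    · exact Or.inr (Or.inr ⟨h.symm, h2⟩)
  · exact Or.inr (Or.inl h)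

lemma alex_total (p q : A × B) : alexRel p q ∨ alexRel q p := by
  rcases lt_trichotomy p.2 q.2 with h | h | h
  · exact Or.inl (Or.inl h)
  · rcases le_total p.1 q.1 with h2 | h2
    · exact Or.inl (Or.inr ⟨h, h2⟩)
    · exact Or.inr (Or.inr ⟨h.symm, h2⟩)
  · exact Or.inr (Or.inl h)

lemma lex_trans {p q r : A × B} (h1 : lexRel p q) (h2 : lexRel q r) : lexRel p r := by
  rcases h1 with h1 | ⟨h1, h1'⟩ <;> rcases h2 with h2 | ⟨h2, h2'⟩
  · exact Or.inl (h1.trans h2)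
  · exact Or.inl (h2 ▸ h1)
  · exact Or.inl (h1 ▸ h2)
  · exact Or.inr ⟨h1.trans h2, h1'.trans h2'⟩

lemma alex_trans {p q r : A × B} (h1 : alexRel p q) (h2 : alexRel q r) : alexRel p r := by
  rcases h1 with h1 | ⟨h1, h1'⟩ <;> rcases h2 with h2 | ⟨h2, h2'⟩
  · exact Or.inl (h1.trans h2)
  · exact Or.inl (h2 ▸ h1)
  · exact Or.inl (h1 ▸ h2)
  · exact Or.inr ⟨h1.trans h2, h1'.trans h2'⟩

lemma lex_antisymm {p q : A × B} (h1 : lexRel p q) (h2 : lexRel q p) : p = q := by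
  rcases h1 with h1 | ⟨h1, h1'⟩ <;> rcases h2 with h2 | ⟨h2, h2'⟩
  · exact absurd h2 h1.asymm
  · exact absurd h2 h1.ne'
  · exact absurd h1 h2.ne'
  · exact Prod.ext h1 (le_antisymm h1' h2')

lemma alex_antisymm {p q : A × B} (h1 : alexRel p q) (h2 : alexRel q p) : p = q := by
  rcases h1 with h1 | ⟨h1, h1'⟩ <;> rcases h2 with h2 | ⟨h2, h2'⟩
  · exact absurd h2 h1.asymm
  · exact absurd h2 h1.ne'
  · exact absurd h1 h2.ne'
  · exact Prod.ext (le_antisymm h1' h2') h1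

lemma lex_of_le {p q : A × B} (h1 : p.1 ≤ q.1) (h2 : p.2 ≤ q.2) : lexRel p q :=
  h1.lt_or_eq.elim Or.inl (fun e => Or.inr ⟨e, h2⟩)

lemma alex_of_le {p q : A × B} (h1 : p.1 ≤ q.1) (h2 : p.2 ≤ q.2) : alexRel p q :=
  h2.lt_or_eq.elim Or.inl (fun e => Or.inr ⟨e, h1⟩)

/-- A linear extension of the product order. -/
structure LinExt (R : A × B → A × B → Prop) : Prop where
  total : ∀ p q, R p q ∨ R q p
  antisymm : ∀ {p q}, R p q → R q p → p = q
  trans : ∀ {p q r}, R p q → R q r → R p r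
  ext : ∀ {p q : A × B}, p.1 ≤ q.1 → p.2 ≤ q.2 → R p q

def Incomp (p q : A × B) : Prop :=
  ¬(p.1 ≤ q.1 ∧ p.2 ≤ q.2) ∧ ¬(q.1 ≤ p.1 ∧ q.2 ≤ p.2)

lemma incomp_of {p q : A × B} (h1 : p.1 < q.1) (h2 : q.2 < p.2) : Incomp p q :=
  ⟨fun h => absurd h.2 h2.not_ge, fun h => absurd h.1 h1.not_ge⟩

lemma Incomp.symm {p q : A × B} (h : Incomp p q) : Incomp q p := ⟨h.2, h.1⟩

lemma Incomp.ne {p q : A × B} (h : Incomp p q) : p ≠ q := by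
  rintro rfl; exact h.1 ⟨le_refl _, le_refl _⟩

variable {R S : A × B → A × B → Prop}

lemma flipRel (hS : LinExt S)
    (hRS : ∀ {p q : A × B}, R p q → S p q → p.1 ≤ q.1 ∧ p.2 ≤ q.2)
    {p q : A × B} (hinc : Incomp p q) (h : R p q) : S q p :=
  (hS.total p q).resolve_left (fun h' => hinc.1 (hRS h h'))

lemma stepFst (hR : LinExt R) (hS : LinExt S)
    (hRS : ∀ {p q : A × B}, R p q → S p q → p.1 ≤ q.1 ∧ p.2 ≤ q.2)
    {p p' q : A × B} (hpq : Incomp p q) (hp'q : Incomp p' q)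
    (hpp' : p.1 ≤ p'.1 ∧ p.2 ≤ p'.2) : R p q ↔ R p' q := by
  constructor
  · intro h
    by_contra h'
    have hq : R q p' := (hR.total p' q).resolve_left h'
    have s1 : S q p := flipRel hS hRS hpq h
    have s2 : S p' q := flipRel hS hRS hp'q.symm hq
    have heq : p = p' := hS.antisymm (hS.ext hpp'.1 hpp'.2) (hS.trans s2 s1)
    exact h' (heq ▸ h)
  · intro h
    by_contra h'
    have hq : R q p := (hR.total p q).resolve_left h'
    have : R q p' := hR.trans hq (hR.ext hpp'.1 hpp'.2)
    exact hp'q.ne.symm (hR.antisymm this h)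

lemma stepSnd (hR : LinExt R) (hS : LinExt S)
    (hRS : ∀ {p q : A × B}, R p q → S p q → p.1 ≤ q.1 ∧ p.2 ≤ q.2)
    {p q q' : A × B} (hpq : Incomp p q) (hpq' : Incomp p q')
    (hqq' : q.1 ≤ q'.1 ∧ q.2 ≤ q'.2) : R p q ↔ R p q' := by
  constructor
  · intro h
    exact hR.trans h (hR.ext hqq'.1 hqq'.2)
  · intro h
    by_contra h'
    have hq : R q p := (hR.total p q).resolve_left h'
    have s1 : S q' p := flipRel hS hRS hpq' h
    have s2 : S p q := flipRel hS hRS hpq.symm hq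
    have heq : q = q' := hS.antisymm (hS.ext hqq'.1 hqq'.2) (hS.trans s1 s2)
    exact h' (heq ▸ h)

lemma ornt (hR : LinExt R) (hS : LinExt S)
    (hRS : ∀ {p q : A × B}, R p q → S p q → p.1 ≤ q.1 ∧ p.2 ≤ q.2)
    {a a' c c' : A} {b b' d d' : B}
    (ha : a < a') (hb : b' < b) (hc : c < c') (hd : d' < d) :
    R (a, b) (a', b') ↔ R (c, d) (c', d') := by
  have hb1 : b' < b ⊔ d := hb.trans_le le_sup_left
  have hbd : b' ⊓ d' < b ⊔ d := lt_of_le_of_lt inf_le_left hb1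
  have ha1 : a ⊓ c < a' := lt_of_le_of_lt inf_le_left ha
  have ha2 : a ⊓ c < a' ⊔ c' := ha1.trans_le le_sup_left
  have hc1 : c < a' ⊔ c' := hc.trans_le le_sup_right
  have hd1 : b' ⊓ d' < d := lt_of_le_of_lt inf_le_right hd
  have e1 : R (a, b) (a', b') ↔ R (a, b ⊔ d) (a', b') :=
    stepFst hR hS hRS (incomp_of ha hb) (incomp_of ha hb1) ⟨le_refl _, le_sup_left⟩
  have e2 : R (a, b ⊔ d) (a', b') ↔ R (a, b ⊔ d) (a', b' ⊓ d') :=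
    (stepSnd (q := (a', b' ⊓ d')) (q' := (a', b')) hR hS hRS (incomp_of ha hbd) (incomp_of ha hb1) ⟨le_refl _, inf_le_left⟩).symm
  have e3 : R (a, b ⊔ d) (a', b' ⊓ d') ↔ R (a ⊓ c, b ⊔ d) (a', b' ⊓ d') :=
    (stepFst (p := (a ⊓ c, b ⊔ d)) (p' := (a, b ⊔ d)) hR hS hRS (incomp_of ha1 hbd) (incomp_of ha hbd) ⟨inf_le_left, le_refl _⟩).symm
  have e4 : R (a ⊓ c, b ⊔ d) (a', b' ⊓ d') ↔ R (a ⊓ c, b ⊔ d) (a' ⊔ c', b' ⊓ d') :=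
    stepSnd hR hS hRS (incomp_of ha1 hbd) (incomp_of ha2 hbd) ⟨le_sup_left, le_refl _⟩
  have e5 : R (a ⊓ c, b ⊔ d) (a' ⊔ c', b' ⊓ d') ↔ R (c, b ⊔ d) (a' ⊔ c', b' ⊓ d') :=
    stepFst hR hS hRS (incomp_of ha2 hbd) (incomp_of hc1 hbd) ⟨inf_le_right, le_refl _⟩
  have e6 : R (c, b ⊔ d) (a' ⊔ c', b' ⊓ d') ↔ R (c, b ⊔ d) (c', b' ⊓ d') :=
    (stepSnd (q := (c', b' ⊓ d')) (q' := (a' ⊔ c', b' ⊓ d')) hR hS hRS (incomp_of hc hbd) (incomp_of hc1 hbd) ⟨le_sup_right, le_refl _⟩).symm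
  have e7 : R (c, b ⊔ d) (c', b' ⊓ d') ↔ R (c, d) (c', b' ⊓ d') :=
    (stepFst (p := (c, d)) (p' := (c, b ⊔ d)) hR hS hRS (incomp_of hc hd1) (incomp_of hc hbd) ⟨le_refl _, le_sup_right⟩).symm
  have e8 : R (c, d) (c', b' ⊓ d') ↔ R (c, d) (c', d') :=
    stepSnd hR hS hRS (incomp_of hc hd1) (incomp_of hc hd) ⟨le_refl _, inf_le_right⟩
  exact e1.trans (e2.trans (e3.trans (e4.trans (e5.trans (e6.trans (e7.trans e8))))))

lemma dichotomy (hR : LinExt R) (hS : LinExt S)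
    (hRS : ∀ {p q : A × B}, R p q → S p q → p.1 ≤ q.1 ∧ p.2 ≤ q.2) :
    (∀ p q, R p q ↔ lexRel p q) ∨ (∀ p q, R p q ↔ alexRel p q) := by
  by_cases h : ∀ p q : A × B, p.1 < q.1 → q.2 < p.2 → R p q
  · left
    have hlex : ∀ p q : A × B, lexRel p q → R p q := by
      intro p q hl
      rcases hl with h1 | ⟨h1, h2⟩
      · rcases le_or_gt p.2 q.2 with h2 | h2
        · exact hR.ext h1.le h2
        · exact h p q h1 h2
      · exact hR.ext h1.le h2
    intro p q
    constructor
    · intro hr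
      rcases lex_total p q with hl | hl
      · exact hl
      · rw [hR.antisymm hr (hlex q p hl)]
        exact lex_refl q
    · exact hlex p q
  · right
    push_neg at h
    obtain ⟨p₀, q₀, h1, h2, h3⟩ := h
    have h' : ∀ p q : A × B, p.1 < q.1 → q.2 < p.2 → R q p := by
      intro u v hu1 hu2
      have e : R u v ↔ R p₀ q₀ := ornt hR hS hRS hu1 hu2 h1 h2
      exact (hR.total u v).resolve_left (fun hh => h3 (e.mp hh))
    have halex : ∀ p q : A × B, alexRel p q → R p q := by
      intro p q hl
      rcases hl with h1 | ⟨h1, h2⟩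
      · rcases le_or_gt p.1 q.1 with h2 | h2
        · exact hR.ext h2 h1.le
        · exact h' q p h2 h1
      · exact hR.ext h2 h1.le
    intro p q
    constructor
    · intro hr
      rcases alex_total p q with hl | hl
      · exact hl
      · rw [hR.antisymm hr (halex q p hl)]
        exact alex_refl q
    · exact halex p q

lemma mirror_lex (hR : LinExt R) (hS : LinExt S)
    (hRS : ∀ {p q : A × B}, R p q → S p q → p.1 ≤ q.1 ∧ p.2 ≤ q.2)
    (hld : ∀ p q, R p q ↔ lexRel p q) :
    ∀ p q : A × B, alexRel p q ↔ S p q := by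
  have halex : ∀ p q : A × B, alexRel p q → S p q := by
    intro p q hl
    rcases hl with h1 | ⟨h1, h2⟩
    · rcases le_or_gt p.1 q.1 with h2 | h2
      · exact hS.ext h2 h1.le
      · exact flipRel hS hRS (incomp_of h2 h1) ((hld q p).mpr (Or.inl h2))
    · exact hS.ext h2 h1.le
  intro p q
  constructor
  · exact halex p q
  · intro hs
    rcases alex_total p q with hl | hl
    · exact hl
    · rw [hS.antisymm hs (halex q p hl)]
      exact alex_refl q

lemma mirror_alex (hR : LinExt R) (hS : LinExt S)
    (hRS : ∀ {p q : A × B}, R p q → S p q → p.1 ≤ q.1 ∧ p.2 ≤ q.2)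
    (hld : ∀ p q, R p q ↔ alexRel p q) :
    ∀ p q : A × B, lexRel p q ↔ S p q := by
  have hlex : ∀ p q : A × B, lexRel p q → S p q := by
    intro p q hl
    rcases hl with h1 | ⟨h1, h2⟩
    · rcases le_or_gt p.2 q.2 with h2 | h2
      · exact hS.ext h1.le h2
      · exact flipRel hS hRS (incomp_of h1 h2).symm ((hld q p).mpr (Or.inl h2))
    · exact hS.ext h1.le h2
  intro p q
  constructor
  · exact hlex p q
  · intro hs
    rcases lex_total p q with hl | hl
    · exact hl
    · rw [hS.antisymm hs (hlex q p hl)]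
      exact lex_refl q

end Aux

theorem embedding_of_products_preserves_lex_alex
    {A B C D : Type*} [LinearOrder A] [LinearOrder B] [LinearOrder C] [LinearOrder D]
    [Fintype A] [Fintype B] [Fintype C] [Fintype D]
    [Nonempty A] [Nonempty B] [Nonempty C] [Nonempty D]
    (f : A × B → C × D) (hinj : Function.Injective f)
    (hemb : ∀ p q : A × B,
      (p.1 ≤ q.1 ∧ p.2 ≤ q.2) ↔ ((f p).1 ≤ (f q).1 ∧ (f p).2 ≤ (f q).2)) :
    ((∀ p q : A × B, lexRel p q ↔ lexRel (f p) (f q)) ∧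
     (∀ p q : A × B, alexRel p q ↔ alexRel (f p) (f q))) ∨
    ((∀ p q : A × B, lexRel p q ↔ alexRel (f p) (f q)) ∧
     (∀ p q : A × B, alexRel p q ↔ lexRel (f p) (f q))) := by
  set R : A × B → A × B → Prop := fun p q => lexRel (f p) (f q) with hRdef
  set S : A × B → A × B → Prop := fun p q => alexRel (f p) (f q) with hSdef
  have hR : LinExt R := by
    refine ⟨fun p q => lex_total (f p) (f q), ?_, fun h1 h2 => lex_trans h1 h2, ?_⟩
    · intro p q h1 h2
      exact hinj (lex_antisymm h1 h2)
    · intro p q h1 h2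
      have := (hemb p q).mp ⟨h1, h2⟩
      exact lex_of_le this.1 this.2
  have hS : LinExt S := by
    refine ⟨fun p q => alex_total (f p) (f q), ?_, fun h1 h2 => alex_trans h1 h2, ?_⟩
    · intro p q h1 h2
      exact hinj (alex_antisymm h1 h2)
    · intro p q h1 h2
      have := (hemb p q).mp ⟨h1, h2⟩
      exact alex_of_le this.1 this.2
  have hRS : ∀ {p q : A × B}, R p q → S p q → p.1 ≤ q.1 ∧ p.2 ≤ q.2 := by
    intro p q h1 h2
    refine (hemb p q).mpr ⟨?_, ?_⟩
    · rcases h1 with h1 | ⟨h1, _⟩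
      · exact h1.le
      · exact h1.le
    · rcases h2 with h2 | ⟨h2, _⟩
      · exact h2.le
      · exact h2.le
  rcases dichotomy hR hS (fun h1 h2 => hRS h1 h2) with hld | hld
  · left
    exact ⟨fun p q => (hld p q).symm,
      fun p q => mirror_lex hR hS (fun h1 h2 => hRS h1 h2) hld p q⟩
  · right
    exact ⟨fun p q => mirror_alex hR hS (fun h1 h2 => hRS h1 h2) hld p q,
      fun p q => (hld p q).symm⟩
end

section
/- The class of finite partial orders of dimension at most 2 does not have the amalgamation property: there exist finite posets A, B, C of dimension at most 2 and order embeddings f : A → B, g : A → C such that there is no finite poset D of dimension at most 2 with order embeddings f' : B → D, g' : C → D satisfying f' ∘ f = g' ∘ g. -/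
/-- A partial order relation has dimension at most 2. -/
def TwoDim {α : Type} (le : α → α → Prop) : Prop :=
  ∃ r₁ r₂ : α → α → Prop, IsLinearOrder α r₁ ∧ IsLinearOrder α r₂ ∧
    ∀ x y, le x y ↔ (r₁ x y ∧ r₂ x y)

/-- Order embedding between relational structures. -/
def IsEmb {α β : Type} (la : α → α → Prop) (lb : β → β → Prop) (f : α → β) : Prop :=
  Function.Injective f ∧ ∀ x y, la x y ↔ lb (f x) (f y)

/- Auxiliary definitions: the three posets of the counterexample span.
   A = {a1, a2, z} (a 3-element antichain), indices 0,1,2.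
   B = A ∪ {u} (index 3) with a1 < u and a2 < u.
   C = A ∪ {v, y1, y2} (indices 3,4,5) with z < v < y1, z < v < y2,
       a1 < y2, a2 < y1. -/

def lAexp : Fin 3 → Fin 3 → Prop := fun x y => x = y

def lBexp : Fin 4 → Fin 4 → Prop := fun x y =>
  x = y ∨ (x = 0 ∧ y = 3) ∨ (x = 1 ∧ y = 3)

def lCexp : Fin 6 → Fin 6 → Prop := fun x y =>
  x = y ∨ (x = 0 ∧ y = 5) ∨ (x = 1 ∧ y = 4) ∨ (x = 2 ∧ y = 3) ∨
    (x = 2 ∧ y = 4) ∨ (x = 2 ∧ y = 5) ∨ (x = 3 ∧ y = 4) ∨ (x = 3 ∧ y = 5)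

instance : DecidablePred (fun p : Fin 3 × Fin 3 => lAexp p.1 p.2) := by
  intro p; unfold lAexp; infer_instance

instance decLB (x y : Fin 4) : Decidable (lBexp x y) := by
  unfold lBexp; infer_instance

instance decLC (x y : Fin 6) : Decidable (lCexp x y) := by
  unfold lCexp; infer_instance

instance decLA (x y : Fin 3) : Decidable (lAexp x y) := by
  unfold lAexp; infer_instance

/-- Linear order from an injective rank function. -/
lemma mkLin {n : ℕ} (p : Fin n → ℕ) (hinj : ∀ a b, p a = p b → a = b) :
    IsLinearOrder (Fin n) (fun x y => p x ≤ p y) where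
  refl := fun a => le_refl _
  trans := fun a b c hab hbc => le_trans hab hbc
  antisymm := fun a b h1 h2 => hinj a b (le_antisymm h1 h2)
  total := fun a b => le_total _ _

/-- Key combinatorial lemma: a 2-dimensional order cannot contain the
    "standard example" pattern (a crown S₃ as a weak subposet). -/
lemma no_crown_pattern {D : Type} (lD : D → D → Prop) (h2 : TwoDim lD)
    (x1 x2 x3 y1 y2 y3 : D)
    (h12 : lD x1 y2) (h13 : lD x1 y3) (h21 : lD x2 y1) (h23 : lD x2 y3)
    (h31 : lD x3 y1) (h32 : lD x3 y2)
    (n1 : ¬ lD x1 y1) (n2 : ¬ lD x2 y2) (n3 : ¬ lD x3 y3) : False := by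
  obtain ⟨r1, r2, hl1, hl2, hiff⟩ := h2
  -- from each non-relation, one of the two linear orders puts yi below xi
  have key : ∀ (r : D → D → Prop), IsLinearOrder D r →
      (∀ a b, lD a b → r a b) →
      ∀ xi yi xj yj, r yi xi → r yj xj → lD xi yj → lD xj yi → ¬ lD xi yi → False := by
    intro r hlin hsub xi yi xj yj hi hj hij hji hni
    have t1 : r xi xj := hlin.trans _ _ _ (hsub _ _ hij) hj
    have t2 : r xj xi := hlin.trans _ _ _ (hsub _ _ hji) hi
    have : xi = xj := hlin.antisymm _ _ t1 t2
    exact hni (this ▸ hji)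
  have sub1 : ∀ a b, lD a b → r1 a b := fun a b h => ((hiff a b).mp h).1
  have sub2 : ∀ a b, lD a b → r2 a b := fun a b h => ((hiff a b).mp h).2
  have alt : ∀ xi yi, ¬ lD xi yi → (r1 yi xi ∨ r2 yi xi) := by
    intro xi yi hn
    by_cases h1 : r1 xi yi
    · by_cases h2' : r2 xi yi
      · exact absurd ((hiff xi yi).mpr ⟨h1, h2'⟩) hn
      · rcases hl2.total xi yi with h | h
        · exact absurd h h2'
        · exact Or.inr h
    · rcases hl1.total xi yi with h | h
      · exact absurd h h1
      · exact Or.inl h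
  rcases alt x1 y1 n1 with a1 | a1 <;> rcases alt x2 y2 n2 with a2 | a2 <;>
    rcases alt x3 y3 n3 with a3 | a3
  · exact key r1 hl1 sub1 x1 y1 x2 y2 a1 a2 h12 h21 n1
  · exact key r1 hl1 sub1 x1 y1 x2 y2 a1 a2 h12 h21 n1
  · exact key r1 hl1 sub1 x1 y1 x3 y3 a1 a3 h13 h31 n1
  · exact key r2 hl2 sub2 x2 y2 x3 y3 a2 a3 h23 h32 n2
  · exact key r1 hl1 sub1 x2 y2 x3 y3 a2 a3 h23 h32 n2
  · exact key r2 hl2 sub2 x1 y1 x3 y3 a1 a3 h13 h31 n1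
  · exact key r2 hl2 sub2 x1 y1 x2 y2 a1 a2 h12 h21 n1
  · exact key r2 hl2 sub2 x1 y1 x2 y2 a1 a2 h12 h21 n1

theorem two_dim_posets_fail_amalgamation :
    ∃ (A B C : Type) (lA : A → A → Prop) (lB : B → B → Prop) (lC : C → C → Prop),
      Finite A ∧ Finite B ∧ Finite C ∧
      IsPartialOrder A lA ∧ IsPartialOrder B lB ∧ IsPartialOrder C lC ∧
      TwoDim lA ∧ TwoDim lB ∧ TwoDim lC ∧
      ∃ (f : A → B) (g : A → C), IsEmb lA lB f ∧ IsEmb lA lC g ∧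
        ¬ ∃ (D : Type) (lD : D → D → Prop), Finite D ∧ IsPartialOrder D lD ∧ TwoDim lD ∧
            ∃ (f' : B → D) (g' : C → D), IsEmb lB lD f' ∧ IsEmb lC lD g' ∧
              f' ∘ f = g' ∘ g := by
  refine ⟨Fin 3, Fin 4, Fin 6, lAexp, lBexp, lCexp, inferInstance, inferInstance,
    inferInstance, ?_, ?_, ?_, ?_, ?_, ?_,
    Fin.castLE (by omega), Fin.castLE (by omega), ⟨?_, ?_⟩, ⟨?_, ?_⟩, ?_⟩
  · exact { refl := by decide, trans := by decide, antisymm := by decide }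
  · exact { refl := by decide, trans := by decide, antisymm := by decide }
  · exact { refl := by decide, trans := by decide, antisymm := by decide }
  · exact ⟨_, _, mkLin ![0, 1, 2] (by decide), mkLin ![2, 1, 0] (by decide), by decide⟩
  · exact ⟨_, _, mkLin ![0, 1, 3, 2] (by decide), mkLin ![2, 1, 0, 3] (by decide), by decide⟩
  · exact ⟨_, _, mkLin ![0, 4, 1, 2, 5, 3] (by decide), mkLin ![4, 0, 1, 2, 3, 5] (by decide),
      by decide⟩
  · exact fun a b h => Fin.ext (by simpa using congrArg Fin.val h)
  · decide
  · exact fun a b h => Fin.ext (by simpa using congrArg Fin.val h)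
  · decide
  · rintro ⟨D, lD, -, hPO, h2D, f', g', ⟨-, hf⟩, ⟨-, hg⟩, hcomp⟩
    -- common points: f' and g' agree on the images of A
    have hA : ∀ a : Fin 3, f' (Fin.castLE (by omega) a) = g' (Fin.castLE (by omega) a) :=
      fun a => congrFun hcomp a
    have h0 : f' 0 = g' 0 := hA 0
    have h1 : f' 1 = g' 1 := hA 1
    have h2 : f' 2 = g' 2 := hA 2
    -- pinned relations
    have ha1u : lD (f' 0) (f' 3) := (hf 0 3).mp (by decide)
    have ha2u : lD (f' 1) (f' 3) := (hf 1 3).mp (by decide)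
    have hzv : lD (g' 2) (g' 3) := (hg 2 3).mp (by decide)
    have hvy1 : lD (g' 3) (g' 4) := (hg 3 4).mp (by decide)
    have hvy2 : lD (g' 3) (g' 5) := (hg 3 5).mp (by decide)
    have ha1y2 : lD (g' 0) (g' 5) := (hg 0 5).mp (by decide)
    have ha2y1 : lD (g' 1) (g' 4) := (hg 1 4).mp (by decide)
    have na1y1 : ¬ lD (g' 0) (g' 4) := fun h => (by decide : ¬ lCexp 0 4) ((hg 0 4).mpr h)
    have na2y2 : ¬ lD (g' 1) (g' 5) := fun h => (by decide : ¬ lCexp 1 5) ((hg 1 5).mpr h)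
    have na1v : ¬ lD (g' 0) (g' 3) := fun h => (by decide : ¬ lCexp 0 3) ((hg 0 3).mpr h)
    have nzu : ¬ lD (f' 2) (f' 3) := fun h => (by decide : ¬ lBexp 2 3) ((hf 2 3).mpr h)
    -- case analysis on the relation between u' = f' 3 and v' = g' 3
    by_cases huv : lD (f' 3) (g' 3)
    · -- a1 ≤ u ≤ v contradicts a1 ⊥ v in C
      have : lD (f' 0) (g' 3) := hPO.trans _ _ _ ha1u huv
      rw [h0] at this
      exact na1v this
    by_cases hvu : lD (g' 3) (f' 3)
    · -- z ≤ v ≤ u contradicts z ⊥ u in B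
      have : lD (g' 2) (f' 3) := hPO.trans _ _ _ hzv hvu
      rw [← h2] at this
      exact nzu this
    · -- otherwise {a1, a2, v ; y1, y2, u} form a crown pattern
      refine no_crown_pattern lD h2D (f' 0) (f' 1) (g' 3) (g' 4) (g' 5) (f' 3)
        ?_ ha1u ?_ ha2u hvy1 hvy2 ?_ ?_ hvu
      · rw [h0]; exact ha1y2
      · rw [h1]; exact ha2y1
      · rw [h0]; exact na1y1
      · rw [h1]; exact na2y2
end
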